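/- (Corollary 1, first part.) Let N ≥ 1, let L be any one of the four Gray labelings, and let B be a ZMod 2-submodule of (Fin N → ZMod 2 × ZMod 2) containing at least two elements. Then (min over pairs b ≠ b̂ in B of a^X(x_b, x_b̂)) ≤ (2/√3) · (min over pairs b ≠ b̂ in B of a^B(x_b, x_b̂)); equivalently, the asymptotic loss L(B) = 20·logb 10 (min a^X / min a^B) is at most 1.25 dB. -/

import Mathlib

open Finset

noncomputable section

/-- Pairwise weight of a pair of 4-PAM symbols: `1` if `|i−j| ∈ {1,3}`,
`4` if `|i−j| = 2`, `0` if `i = j`. -/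
def pw (i j : Fin 4) : ℝ :=
  if i = j then 0 else if ((i : ℤ) - (j : ℤ)).natAbs = 2 then 4 else 1

/-- Corner count: number of positions where the symbol pair is `(s₁,s₄)` or `(s₄,s₁)`. -/
def wc {N : ℕ} (x xh : Fin N → Fin 4) : ℕ :=
  (Finset.univ.filter fun k =>
    (x k, xh k) = ((0 : Fin 4), (3 : Fin 4)) ∨ (x k, xh k) = ((3 : Fin 4), (0 : Fin 4))).card

/-- Weighted error count `β(x, x̂)`. -/
def betaW {N : ℕ} (x xh : Fin N → Fin 4) : ℝ := ∑ k, pw (x k) (xh k)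

/-- Normalized distance of the symbol-wise decoder: `a^X = √(β + 8 w_c)`. -/
def aX {N : ℕ} (x xh : Fin N → Fin 4) : ℝ :=
  Real.sqrt (betaW x xh + 8 * wc x xh)

/-- Normalized distance of the bit-wise decoder: `a^B = (β + 2 w_c)/√β`. -/
def aB {N : ℕ} (x xh : Fin N → Fin 4) : ℝ :=
  (betaW x xh + 2 * wc x xh) / Real.sqrt (betaW x xh)

/-- The Gray labeling GC1 (binary reflected Gray code) for 4-PAM. -/
def GC1 : Fin 4 ≃ (ZMod 2 × ZMod 2) where
  toFun := ![(0, 0), (0, 1), (1, 1), (1, 0)]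
  invFun := fun p => if p = (0, 0) then 0 else if p = (0, 1) then 1
    else if p = (1, 1) then 2 else 3
  left_inv := by decide
  right_inv := by decide

/-- The Gray labeling GC2 for 4-PAM. -/
def GC2 : Fin 4 ≃ (ZMod 2 × ZMod 2) where
  toFun := ![(0, 0), (1, 0), (1, 1), (0, 1)]
  invFun := fun p => if p = (0, 0) then 0 else if p = (1, 0) then 1
    else if p = (1, 1) then 2 else 3
  left_inv := by decide
  right_inv := by decide

/-- The Gray labeling GC3 for 4-PAM. -/
def GC3 : Fin 4 ≃ (ZMod 2 × ZMod 2) where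
  toFun := ![(0, 1), (0, 0), (1, 0), (1, 1)]
  invFun := fun p => if p = (0, 1) then 0 else if p = (0, 0) then 1
    else if p = (1, 0) then 2 else 3
  left_inv := by decide
  right_inv := by decide

/-- The Gray labeling GC4 for 4-PAM. -/
def GC4 : Fin 4 ≃ (ZMod 2 × ZMod 2) where
  toFun := ![(1, 0), (0, 0), (0, 1), (1, 1)]
  invFun := fun p => if p = (1, 0) then 0 else if p = (0, 0) then 1
    else if p = (0, 1) then 2 else 3
  left_inv := by decide
  right_inv := by decide

/-- Symbol sequence corresponding to a binary codeword under labeling `L`. -/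
def xb {N : ℕ} (L : Fin 4 ≃ (ZMod 2 × ZMod 2)) (b : Fin N → ZMod 2 × ZMod 2) :
    Fin N → Fin 4 := fun k => L.symm (b k)

end

/-!
For a single pair of distinct sequences, with `β = β(x, x̂) ≥ 1` and `w = w_c(x, x̂)`, the
inequality `a^X ≤ (2/√3) a^B` becomes, after squaring and clearing denominators,
`3β(β + 8w) ≤ 4(β + 2w)²`, i.e. `0 ≤ (β - 4w)²`. Both minima run over the same pairs of
distinct codewords, so the bound passes to them. Finally `(2/√3)^16 = 65536/6561 ≤ 10` gives
`log₁₀(2/√3) ≤ 1/16`, and `20/16 = 1.25`.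
-/

lemma pw_nonneg (i j : Fin 4) : 0 ≤ pw i j := by
  unfold pw; split_ifs <;> norm_num

lemma one_le_pw {i j : Fin 4} (h : i ≠ j) : 1 ≤ pw i j := by
  unfold pw; rw [if_neg h]; split_ifs <;> norm_num

lemma one_le_betaW {N : ℕ} {x xh : Fin N → Fin 4} (h : x ≠ xh) : 1 ≤ betaW x xh := by
  obtain ⟨k, hk⟩ := Function.ne_iff.1 h
  calc 1 ≤ pw (x k) (xh k) := one_le_pw hk
    _ ≤ betaW x xh := single_le_sum (fun j _ => pw_nonneg (x j) (xh j)) (mem_univ k)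

lemma sqrt_add_eight_mul_le {β w : ℝ} (hβ : 0 < β) (hw : 0 ≤ w) :
    √(β + 8 * w) ≤ 2 / √3 * ((β + 2 * w) / √β) := by
  rw [Real.sqrt_le_left (by positivity), mul_pow, div_pow, div_pow, Real.sq_sqrt (by norm_num),
    Real.sq_sqrt hβ.le, div_mul_div_comm, le_div_iff₀ (by positivity)]
  nlinarith [sq_nonneg (β - 4 * w)]

lemma aX_le_mul_aB {N : ℕ} {x xh : Fin N → Fin 4} (h : x ≠ xh) :
    aX x xh ≤ 2 / √3 * aB x xh :=
  sqrt_add_eight_mul_le (one_pos.trans_le (one_le_betaW h)) (Nat.cast_nonneg _)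

lemma one_le_aX {N : ℕ} {x xh : Fin N → Fin 4} (h : x ≠ xh) : 1 ≤ aX x xh := by
  have hw : (0 : ℝ) ≤ wc x xh := Nat.cast_nonneg _
  rw [aX, Real.one_le_sqrt]
  linarith [one_le_betaW h]

lemma xb_injective {N : ℕ} (L : Fin 4 ≃ (ZMod 2 × ZMod 2)) :
    Function.Injective (xb (N := N) L) :=
  fun _ _ h => funext fun k => L.symm.injective (congrFun h k)

lemma csInf_le_mul_csInf {S T : Set ℝ} {c : ℝ} (hc : 0 ≤ c) (hS : BddBelow S)
    (hT : T.Nonempty) (h : ∀ t ∈ T, ∃ s ∈ S, s ≤ c * t) : sInf S ≤ c * sInf T := by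
  rw [← smul_eq_mul, ← Real.sInf_smul_of_nonneg hc]
  refine le_csInf hT.smul_set ?_
  rintro _ ⟨t, ht, rfl⟩
  obtain ⟨s, hs, hst⟩ := h t ht
  exact (csInf_le hS hs).trans hst

lemma twenty_mul_logb_two_div_sqrt_three_le : 20 * Real.logb 10 (2 / √3) ≤ 1.25 := by
  have hpow : (2 / √3) ^ 16 = (65536 / 6561 : ℝ) := by
    have h3 : √3 ^ 16 = (3 ^ 8 : ℝ) := by
      rw [show 16 = 2 * 8 from rfl, pow_mul, Real.sq_sqrt (by norm_num)]
    rw [div_pow, h3]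
    norm_num
  have hlog : Real.logb 10 ((2 / √3) ^ 16) ≤ 1 := by
    rw [hpow, ← Real.logb_self_eq_one (b := 10) (by norm_num)]
    exact Real.logb_le_logb_of_le (by norm_num) (by norm_num) (by norm_num)
  rw [Real.logb_pow] at hlog
  push_cast at hlog
  linarith

theorem loss_code_le_general (N : ℕ)
    (L : Fin 4 ≃ (ZMod 2 × ZMod 2))
    (B : Submodule (ZMod 2) (Fin N → ZMod 2 × ZMod 2))
    (hB : (B : Set (Fin N → ZMod 2 × ZMod 2)).Nontrivial) :
    sInf {r : ℝ | ∃ b ∈ B, ∃ bh ∈ B, b ≠ bh ∧ r = aX (xb L b) (xb L bh)}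
        ≤ (2 / Real.sqrt 3)
          * sInf {r : ℝ | ∃ b ∈ B, ∃ bh ∈ B, b ≠ bh ∧ r = aB (xb L b) (xb L bh)}
    ∧ 20 * Real.logb 10
        (sInf {r : ℝ | ∃ b ∈ B, ∃ bh ∈ B, b ≠ bh ∧ r = aX (xb L b) (xb L bh)}
          / sInf {r : ℝ | ∃ b ∈ B, ∃ bh ∈ B, b ≠ bh ∧ r = aB (xb L b) (xb L bh)})
        ≤ 1.25 := by
  set SX := {r : ℝ | ∃ b ∈ B, ∃ bh ∈ B, b ≠ bh ∧ r = aX (xb L b) (xb L bh)}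
  set SB := {r : ℝ | ∃ b ∈ B, ∃ bh ∈ B, b ≠ bh ∧ r = aB (xb L b) (xb L bh)}
  obtain ⟨b₀, hb₀, b₁, hb₁, hne⟩ := hB
  have hSX_ge : ∀ r ∈ SX, 1 ≤ r := by
    rintro _ ⟨b, -, bh, -, hne, rfl⟩
    exact one_le_aX ((xb_injective L).ne hne)
  have hSX : 1 ≤ sInf SX := le_csInf ⟨_, b₀, hb₀, b₁, hb₁, hne, rfl⟩ hSX_ge
  have hmain : sInf SX ≤ 2 / √3 * sInf SB := by
    refine csInf_le_mul_csInf (by positivity) ⟨1, hSX_ge⟩ ⟨_, b₀, hb₀, b₁, hb₁, hne, rfl⟩ ?_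
    rintro _ ⟨b, hb, bh, hbh, hne, rfl⟩
    exact ⟨_, ⟨b, hb, bh, hbh, hne, rfl⟩, aX_le_mul_aB ((xb_injective L).ne hne)⟩
  have hSB : 0 < sInf SB :=
    pos_of_mul_pos_right ((one_pos.trans_le hSX).trans_le hmain) (by positivity)
  have hratio : sInf SX / sInf SB ≤ 2 / √3 := (div_le_iff₀ hSB).2 hmain
  refine ⟨hmain, ?_⟩
  calc 20 * Real.logb 10 (sInf SX / sInf SB) ≤ 20 * Real.logb 10 (2 / √3) := by
        gcongr
        norm_num
    _ ≤ 1.25 := twenty_mul_logb_two_div_sqrt_three_le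

/-- **Corollary 1, first part.** For 4-PAM with any Gray labeling
and any linear code `B` (with at least two codewords), the asymptotic loss
`L(B) = 20·log₁₀(min a^X / min a^B)` is at most 1.25 dB. -/
theorem loss_code_le (N : ℕ) (hN : 1 ≤ N)
    (L : Fin 4 ≃ (ZMod 2 × ZMod 2)) (hL : L = GC1 ∨ L = GC2 ∨ L = GC3 ∨ L = GC4)
    (B : Submodule (ZMod 2) (Fin N → ZMod 2 × ZMod 2))
    (hB : (B : Set (Fin N → ZMod 2 × ZMod 2)).Nontrivial) :
    sInf {r : ℝ | ∃ b ∈ B, ∃ bh ∈ B, b ≠ bh ∧ r = aX (xb L b) (xb L bh)}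
        ≤ (2 / Real.sqrt 3)
          * sInf {r : ℝ | ∃ b ∈ B, ∃ bh ∈ B, b ≠ bh ∧ r = aB (xb L b) (xb L bh)}
    ∧ 20 * Real.logb 10
        (sInf {r : ℝ | ∃ b ∈ B, ∃ bh ∈ B, b ≠ bh ∧ r = aX (xb L b) (xb L bh)}
          / sInf {r : ℝ | ∃ b ∈ B, ∃ bh ∈ B, b ≠ bh ∧ r = aB (xb L b) (xb L bh)})
        ≤ 1.25 :=
  loss_code_le_general N L B hB
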